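/- arXiv:1510.03978 — 2 statements merged into one kernel-verified Lean document; each statement's English description precedes it below -/
import Mathlib

section
/- Let Ω ⊂ ℝ^d be a bounded domain. Let M_n ⊂ L²_∘(Ω) and X_n ⊂ H¹₀(Ω)^d, n ∈ ℕ, be a sequence of closed subspaces, with discrete inf-sup constants β_n. If the sequence (M_n) is asymptotically dense in L²_∘(Ω), then limsup_{n→∞} β_n ≤ β(Ω). -/
open MeasureTheory Filter Topology RealInnerProductSpace

noncomputable section

/-- Euclidean space `ℝ^d`. -/
abbrev Euc (d : ℕ) : Type := EuclideanSpace ℝ (Fin d)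

/-- `d × d` matrices with the Frobenius (Euclidean) norm, used for Jacobian fields. -/
abbrev Mat (d : ℕ) : Type := EuclideanSpace ℝ (Fin d × Fin d)

/-- Lebesgue measure restricted to `Ω`. -/
def vol (d : ℕ) (Ω : Set (Euc d)) : Measure (Euc d) := volume.restrict Ω

/-- `L²(Ω)` (scalar valued). -/
abbrev L2S (d : ℕ) (Ω : Set (Euc d)) := Lp ℝ 2 (vol d Ω)

/-- `L²(Ω)` of matrix-valued fields (gradients of vector fields). -/
abbrev L2M (d : ℕ) (Ω : Set (Euc d)) := Lp (Mat d) 2 (vol d Ω)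

/-- The set `L²_∘(Ω)` of square-integrable functions with zero mean value. -/
def meanZero (d : ℕ) (Ω : Set (Euc d)) : Set (L2S d Ω) :=
  {q | ∫ x, q x ∂(vol d Ω) = 0}

/-- Smooth compactly supported vector fields on `Ω` (test velocities). -/
def IsTestVF (d : ℕ) (Ω : Set (Euc d)) (v : Euc d → Euc d) : Prop :=
  ContDiff ℝ (⊤ : ℕ∞) v ∧ HasCompactSupport v ∧ tsupport v ⊆ Ω

/-- The Jacobian matrix of a vector field: `(jacOf v x) (i,j) = ∂_{x_j} v_i (x)`. -/
def jacOf (d : ℕ) (v : Euc d → Euc d) (x : Euc d) : Mat d :=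
  (WithLp.equiv 2 (Fin d × Fin d → ℝ)).symm
    fun p => fderiv ℝ v x (EuclideanSpace.single p.2 1) p.1

/-- The pairing `⟨div v, q⟩_Ω` expressed through the Jacobian field `g` of `v`:
the divergence is the trace of the Jacobian. -/
def divPair (d : ℕ) (Ω : Set (Euc d)) (g : L2M d Ω) (q : L2S d Ω) : ℝ :=
  ∫ x, (∑ i, g x (i, i)) * q x ∂(vol d Ω)

/-- Jacobians of test vector fields, as elements of `L²(Ω)` of matrix fields. -/
def gradSet (d : ℕ) (Ω : Set (Euc d)) : Set (L2M d Ω) :=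
  {g | ∃ v, IsTestVF d Ω v ∧ ∀ᵐ x ∂(vol d Ω), g x = jacOf d v x}

/-- `H¹₀(Ω)^d`, represented by the closure in `L²` of the set of Jacobians of test
vector fields.  (On a connected `Ω` the Jacobian determines the field, and the `H¹`
norm `‖v‖_{1,Ω}` is the `L²` norm of the Jacobian, so this is a faithful model.) -/
def H10grad (d : ℕ) (Ω : Set (Euc d)) : Set (L2M d Ω) := closure (gradSet d Ω)

/-- `J(q) = sup_{v ≠ 0, v ∈ X} ⟨div v, q⟩ / ‖v‖₁`, velocities drawn from a set `X`
of gradient fields. -/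
def supRatio (d : ℕ) (Ω : Set (Euc d)) (X : Set (L2M d Ω)) (q : L2S d Ω) : ℝ :=
  sSup ((fun g => divPair d Ω g q / ‖g‖) '' (X \ {0}))

/-- inf-sup constant for a pair of (velocity gradient, pressure) sets. -/
def infSup (d : ℕ) (Ω : Set (Euc d)) (X : Set (L2M d Ω)) (M : Set (L2S d Ω)) : ℝ :=
  sInf ((fun q => supRatio d Ω X q / ‖q‖) '' (M \ {0}))

/-- The LBB (inf-sup) constant `β(Ω)`. -/
def beta (d : ℕ) (Ω : Set (Euc d)) : ℝ :=
  infSup d Ω (H10grad d Ω) (meanZero d Ω)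

/-- A bounded domain: nonempty connected bounded open set. -/
def IsBoundedDomain (d : ℕ) (Ω : Set (Euc d)) : Prop :=
  IsOpen Ω ∧ IsConnected Ω ∧ Bornology.IsBounded Ω

/-- A closed linear subspace, as a set. -/
def IsClosedSubspace {E : Type*} [NormedAddCommGroup E] [Module ℝ E] (X : Set E) : Prop :=
  IsClosed X ∧ ∃ S : Submodule ℝ E, (S : Set E) = X

/-- A finite-dimensional linear subspace, as a set. -/
def IsFinDimSubspace {E : Type*} [NormedAddCommGroup E] [Module ℝ E] (X : Set E) : Prop :=
  ∃ S : Submodule ℝ E, (S : Set E) = X ∧ FiniteDimensional ℝ S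

/-- The sequence of pressure spaces `M n` is asymptotically dense in `L²_∘(Ω)`. -/
def AsympDense (d : ℕ) (Ω : Set (Euc d)) (M : ℕ → Set (L2S d Ω)) : Prop :=
  ∀ q ∈ meanZero d Ω, ∃ qn : ℕ → L2S d Ω,
    (∀ n, qn n ∈ M n) ∧ Tendsto qn atTop (𝓝 q)

end

noncomputable section AuxLemmas

/-- The trace functional on `Mat d`. -/
def trCLM (d : ℕ) : Mat d →L[ℝ] ℝ := ∑ i : Fin d, EuclideanSpace.proj (i, i)

/-- Trace of an `L²` matrix field, as a continuous linear map `L²M → L²S`. -/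
def trL (d : ℕ) (Ω : Set (Euc d)) : L2M d Ω →L[ℝ] L2S d Ω :=
  (trCLM d).compLpL 2 (vol d Ω)

theorem divPair_eq_inner (d : ℕ) (Ω : Set (Euc d)) (g : L2M d Ω) (q : L2S d Ω) :
    divPair d Ω g q = ⟪trL d Ω g, q⟫ := by
  rw [divPair, L2.inner_def, trL]
  refine integral_congr_ae ?_
  filter_upwards [ContinuousLinearMap.coeFn_compLpL (p := 2) (μ := vol d Ω) (trCLM d) g] with x hx
  rw [RCLike.inner_apply, hx]
  simp [trCLM, starRingEnd_apply, mul_comm]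

theorem abs_divPair_le (d : ℕ) (Ω : Set (Euc d)) (g : L2M d Ω) (q : L2S d Ω) :
    |divPair d Ω g q| ≤ ‖trL d Ω‖ * ‖g‖ * ‖q‖ := by
  rw [divPair_eq_inner]
  calc |⟪trL d Ω g, q⟫| ≤ ‖trL d Ω g‖ * ‖q‖ := abs_real_inner_le_norm _ _
    _ ≤ ‖trL d Ω‖ * ‖g‖ * ‖q‖ := by
        exact mul_le_mul_of_nonneg_right ((trL d Ω).le_opNorm g) (norm_nonneg q)

theorem divPair_ratio_le (d : ℕ) (Ω : Set (Euc d)) (g : L2M d Ω) (q : L2S d Ω)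
    (hg : g ≠ 0) : divPair d Ω g q / ‖g‖ ≤ ‖trL d Ω‖ * ‖q‖ := by
  rw [div_le_iff₀ (norm_pos_iff.mpr hg)]
  calc divPair d Ω g q ≤ |divPair d Ω g q| := le_abs_self _
    _ ≤ ‖trL d Ω‖ * ‖g‖ * ‖q‖ := abs_divPair_le d Ω g q
    _ = ‖trL d Ω‖ * ‖q‖ * ‖g‖ := by ring

theorem ratioSet_bddAbove (d : ℕ) (Ω : Set (Euc d)) (X : Set (L2M d Ω)) (q : L2S d Ω) :
    BddAbove ((fun g => divPair d Ω g q / ‖g‖) '' (X \ {0})) := by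
  refine ⟨‖trL d Ω‖ * ‖q‖, ?_⟩
  rintro r ⟨g, ⟨-, hg⟩, rfl⟩
  exact divPair_ratio_le d Ω g q hg

theorem divPair_neg_left (d : ℕ) (Ω : Set (Euc d)) (g : L2M d Ω) (q : L2S d Ω) :
    divPair d Ω (-g) q = -divPair d Ω g q := by
  rw [divPair_eq_inner, divPair_eq_inner, map_neg, inner_neg_left]

theorem supRatio_nonneg (d : ℕ) (Ω : Set (Euc d)) (X : Set (L2M d Ω))
    (hsym : ∀ g ∈ X, -g ∈ X) (q : L2S d Ω) : 0 ≤ supRatio d Ω X q := by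
  rcases Set.eq_empty_or_nonempty (X \ {0}) with h | ⟨g, hgX, hg0⟩
  · simp [supRatio, h, Real.sSup_empty]
  · have hg0' : g ≠ 0 := hg0
    have h1 : divPair d Ω g q / ‖g‖ ≤ supRatio d Ω X q :=
      le_csSup (ratioSet_bddAbove d Ω X q) ⟨g, ⟨hgX, hg0⟩, rfl⟩
    have h2 : -(divPair d Ω g q / ‖g‖) ≤ supRatio d Ω X q := by
      have hmem : -g ∈ X \ {0} := ⟨hsym g hgX, by simpa using neg_ne_zero.mpr hg0'⟩
      have : divPair d Ω (-g) q / ‖-g‖ = -(divPair d Ω g q / ‖g‖) := by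
        rw [divPair_neg_left, norm_neg, neg_div]
      calc -(divPair d Ω g q / ‖g‖) = divPair d Ω (-g) q / ‖-g‖ := this.symm
        _ ≤ supRatio d Ω X q := le_csSup (ratioSet_bddAbove d Ω X q) ⟨-g, hmem, rfl⟩
    linarith

theorem supRatio_le_of_subset (d : ℕ) (Ω : Set (Euc d)) (X Y : Set (L2M d Ω))
    (q : L2S d Ω) (hXY : X ⊆ Y) (hY0 : 0 ≤ supRatio d Ω Y q) :
    supRatio d Ω X q ≤ supRatio d Ω Y q := by
  rcases Set.eq_empty_or_nonempty (X \ {0}) with h | hne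
  · simp only [supRatio, h, Set.image_empty]
    simpa [Real.sSup_empty, supRatio] using hY0
  · exact csSup_le_csSup (ratioSet_bddAbove d Ω Y q) (hne.image _)
      (Set.image_mono (Set.diff_subset_diff_left hXY))

theorem supRatio_le_add (d : ℕ) (Ω : Set (Euc d)) (X : Set (L2M d Ω)) (q1 q2 : L2S d Ω) :
    supRatio d Ω X q1 ≤ supRatio d Ω X q2 + ‖trL d Ω‖ * ‖q1 - q2‖ := by
  rcases Set.eq_empty_or_nonempty (X \ {0}) with h | hne
  · simp only [supRatio, h, Set.image_empty, Real.sSup_empty]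
    positivity
  · rw [supRatio]
    refine csSup_le (hne.image _) ?_
    rintro r ⟨g, ⟨hgX, hg0⟩, rfl⟩
    show divPair d Ω g q1 / ‖g‖ ≤ supRatio d Ω X q2 + ‖trL d Ω‖ * ‖q1 - q2‖
    have hg0' : g ≠ 0 := hg0
    have hsplit : divPair d Ω g q1 / ‖g‖
        = divPair d Ω g q2 / ‖g‖ + divPair d Ω g (q1 - q2) / ‖g‖ := by
      rw [divPair_eq_inner, divPair_eq_inner, divPair_eq_inner, ← add_div, inner_sub_right]
      ring_nf
    have h1 : divPair d Ω g q2 / ‖g‖ ≤ supRatio d Ω X q2 :=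
      le_csSup (ratioSet_bddAbove d Ω X q2) ⟨g, ⟨hgX, hg0⟩, rfl⟩
    have h2 : divPair d Ω g (q1 - q2) / ‖g‖ ≤ ‖trL d Ω‖ * ‖q1 - q2‖ :=
      divPair_ratio_le d Ω g (q1 - q2) hg0'
    rw [hsplit]
    exact add_le_add h1 h2

theorem gradSet_neg_mem (d : ℕ) (Ω : Set (Euc d)) {g : L2M d Ω} (h : g ∈ gradSet d Ω) :
    -g ∈ gradSet d Ω := by
  obtain ⟨v, ⟨hcd, hcs, hts⟩, hae⟩ := h
  have htsupp : tsupport (fun y => -(v y)) = tsupport v := by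
    rw [tsupport, tsupport, Function.support_fun_neg]
  refine ⟨fun y => -(v y), ⟨hcd.neg, ?_, ?_⟩, ?_⟩
  · rw [HasCompactSupport, htsupp]; exact hcs
  · rw [htsupp]; exact hts
  · filter_upwards [hae, Lp.coeFn_neg g] with x h1 h2
    have : jacOf d (fun y => -(v y)) x = - jacOf d v x := by
      unfold jacOf; rw [fderiv_fun_neg]; rfl
    rw [h2, this, ← h1]
    rfl

theorem H10grad_neg_mem (d : ℕ) (Ω : Set (Euc d)) {g : L2M d Ω} (h : g ∈ H10grad d Ω) :
    -g ∈ H10grad d Ω := by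
  rw [H10grad] at h ⊢
  have hsub : -gradSet d Ω ⊆ gradSet d Ω := by
    intro x hx
    rw [Set.mem_neg] at hx
    simpa using gradSet_neg_mem d Ω hx
  have : -g ∈ -closure (gradSet d Ω) := Set.neg_mem_neg.mpr h
  rw [neg_closure] at this
  exact closure_mono hsub this

end AuxLemmas

noncomputable section

/-- Upper semicontinuity of the discrete inf-sup constants:
if the pressure spaces `M n` are asymptotically dense in `L²_∘(Ω)`, then
`limsup βₙ ≤ β(Ω)`. -/
theorem limsup_discrete_infSup_le
    (d : ℕ) (Ω : Set (Euc d)) (hΩ : IsBoundedDomain d Ω)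
    (X : ℕ → Set (L2M d Ω)) (M : ℕ → Set (L2S d Ω))
    (hX : ∀ n, IsClosedSubspace (X n) ∧ X n ⊆ H10grad d Ω)
    (hM : ∀ n, IsClosedSubspace (M n) ∧ M n ⊆ meanZero d Ω)
    (hdense : AsympDense d Ω M) :
    Filter.limsup (fun n => infSup d Ω (X n) (M n)) atTop ≤ beta d Ω := by
  by_cases hne : (meanZero d Ω \ {0}).Nonempty
  case neg =>
    have hempty : meanZero d Ω \ {0} = ∅ := Set.not_nonempty_iff_eq_empty.mp hne
    have h1 : ∀ n, infSup d Ω (X n) (M n) = 0 := by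
      intro n
      have hMn : M n \ {0} = ∅ :=
        Set.eq_empty_of_subset_empty (hempty ▸ Set.diff_subset_diff_left (hM n).2)
      rw [infSup, hMn, Set.image_empty, Real.sInf_empty]
    have h2 : beta d Ω = 0 := by
      rw [beta, infSup, hempty, Set.image_empty, Real.sInf_empty]
    simp only [h1, h2]
    simpa using limsup_const (α := ℕ) (f := atTop) (0 : ℝ)
  case pos =>
    have hXsym : ∀ n, ∀ g ∈ X n, -g ∈ X n := by
      intro n g hg
      obtain ⟨-, S, hS⟩ := (hX n).1
      rw [← hS] at hg ⊢
      exact S.neg_mem hg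
    have hβnn : ∀ n, 0 ≤ infSup d Ω (X n) (M n) := by
      intro n
      apply Real.sInf_nonneg
      rintro r ⟨p, ⟨-, -⟩, rfl⟩
      exact div_nonneg (supRatio_nonneg d Ω (X n) (hXsym n) p) (norm_nonneg p)
    have hH10nn : ∀ p, 0 ≤ supRatio d Ω (H10grad d Ω) p := fun p =>
      supRatio_nonneg d Ω _ (fun g hg => H10grad_neg_mem d Ω hg) p
    rw [beta, infSup]
    refine le_csInf (hne.image _) ?_
    rintro b ⟨q, ⟨hqmem, hq0⟩, rfl⟩
    have hq0' : q ≠ 0 := hq0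
    obtain ⟨qn, hqnM, hqn⟩ := hdense q hqmem
    set u : ℕ → ℝ := fun n => supRatio d Ω (H10grad d Ω) (qn n) / ‖qn n‖ with hu_def
    have hsub : Tendsto (fun n => ‖qn n - q‖) atTop (𝓝 0) := by
      have h := hqn.sub (tendsto_const_nhds (x := q))
      rw [sub_self] at h
      simpa [Function.comp_def] using (continuous_norm.tendsto (0 : L2S d Ω)).comp h
    have hnum : Tendsto (fun n => supRatio d Ω (H10grad d Ω) (qn n)) atTop
        (𝓝 (supRatio d Ω (H10grad d Ω) q)) := by
      rw [tendsto_iff_dist_tendsto_zero]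
      refine squeeze_zero (fun n => dist_nonneg) (fun n => ?_)
        (by simpa using hsub.const_mul ‖trL d Ω‖)
      rw [Real.dist_eq, abs_sub_le_iff]
      constructor
      · have h := supRatio_le_add d Ω (H10grad d Ω) (qn n) q
        linarith
      · have h := supRatio_le_add d Ω (H10grad d Ω) q (qn n)
        rw [norm_sub_rev] at h
        linarith
    have hnorm : Tendsto (fun n => ‖qn n‖) atTop (𝓝 ‖q‖) :=
      (continuous_norm.tendsto q).comp hqn
    have hu : Tendsto u atTop (𝓝 (supRatio d Ω (H10grad d Ω) q / ‖q‖)) :=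
      hnum.div hnorm (norm_ne_zero_iff.mpr hq0')
    have hev : ∀ᶠ n in atTop, infSup d Ω (X n) (M n) ≤ u n := by
      filter_upwards [hqn.eventually_ne hq0'] with n hn
      have hbdd : BddBelow ((fun p => supRatio d Ω (X n) p / ‖p‖) '' (M n \ {0})) := by
        refine ⟨0, ?_⟩
        rintro r ⟨p, ⟨-, -⟩, rfl⟩
        exact div_nonneg (supRatio_nonneg d Ω (X n) (hXsym n) p) (norm_nonneg p)
      have h1 : infSup d Ω (X n) (M n) ≤ supRatio d Ω (X n) (qn n) / ‖qn n‖ :=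
        csInf_le hbdd ⟨qn n, ⟨hqnM n, by simpa using hn⟩, rfl⟩
      refine h1.trans ?_
      have h2 : supRatio d Ω (X n) (qn n) ≤ supRatio d Ω (H10grad d Ω) (qn n) :=
        supRatio_le_of_subset d Ω (X n) (H10grad d Ω) (qn n) (hX n).2 (hH10nn (qn n))
      exact (div_le_div_iff_of_pos_right (norm_pos_iff.mpr hn)).mpr h2
    calc Filter.limsup (fun n => infSup d Ω (X n) (M n)) atTop
        ≤ Filter.limsup u atTop :=
          limsup_le_limsup hev (isCoboundedUnder_le_of_le atTop hβnn)
            (hu.isBoundedUnder_le)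
      _ = supRatio d Ω (H10grad d Ω) q / ‖q‖ := hu.limsup_eq


end
end

section
/- Let Ω ⊂ ℝ^d be a bounded domain and let (X_n, M_n)_{n∈ℕ} be a sequence of closed subspaces X_n ⊂ H¹₀(Ω)^d, M_n ⊂ L²_∘(Ω) with discrete inf-sup constants β_n. Suppose the discrete LBB condition inf_{n∈ℕ} β_n = β_⋆ > 0 holds and the sequence (M_n) is asymptotically dense in L²_∘(Ω). Then β_⋆ ≤ β(Ω). -/
open MeasureTheory Filter Topology RealInnerProductSpace

noncomputable section

namespace DiscreteLBBAux

open MeasureTheory Filter Topology RealInnerProductSpace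

/-- The trace map on matrices, as a continuous linear map. -/
def trCLM (d : ℕ) : Mat d →L[ℝ] ℝ := ∑ i : Fin d, EuclideanSpace.proj (i, i)

lemma trCLM_apply (d : ℕ) (m : Mat d) : trCLM d m = ∑ i, m (i, i) := by
  simp [trCLM]

lemma abs_trCLM_le (d : ℕ) (m : Mat d) : |trCLM d m| ≤ Real.sqrt d * ‖m‖ := by
  rw [trCLM_apply]
  have h1 : (∑ i, m (i, i)) ^ 2 ≤ (d : ℝ) * ∑ i, m (i, i) ^ 2 := by
    simpa using sq_sum_le_card_mul_sum_sq (s := (Finset.univ : Finset (Fin d)))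
      (f := fun i => m (i, i))
  have h2 : ∑ i : Fin d, m (i, i) ^ 2 ≤ ‖m‖ ^ 2 := by
    have hinj : ∀ x ∈ (Finset.univ : Finset (Fin d)), ∀ y ∈ (Finset.univ : Finset (Fin d)),
        (fun i : Fin d => (i, i)) x = (fun i : Fin d => (i, i)) y → x = y := by
      intro a _ b _ h; simpa [Prod.ext_iff] using h
    rw [show (∑ i : Fin d, m (i, i) ^ 2) = ∑ p ∈ Finset.univ.image (fun i : Fin d => (i, i)), m p ^ 2
      from (Finset.sum_image (g := fun i : Fin d => (i, i))
        (f := fun p : Fin d × Fin d => m p ^ 2) hinj).symm]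
    have : ‖m‖ ^ 2 = ∑ p : Fin d × Fin d, m p ^ 2 := by
      rw [EuclideanSpace.norm_eq, Real.sq_sqrt (by positivity)]
      simp [sq_abs]
    rw [this]
    exact Finset.sum_le_sum_of_subset_of_nonneg (Finset.subset_univ _) (by intros; positivity)
  calc |∑ i, m (i, i)| = Real.sqrt ((∑ i, m (i, i)) ^ 2) := (Real.sqrt_sq_eq_abs _).symm
    _ ≤ Real.sqrt ((d : ℝ) * ‖m‖ ^ 2) :=
        Real.sqrt_le_sqrt (h1.trans (by nlinarith [Nat.cast_nonneg (α := ℝ) d]))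
    _ = Real.sqrt d * ‖m‖ := by
        rw [Real.sqrt_mul (Nat.cast_nonneg d), Real.sqrt_sq (norm_nonneg _)]

lemma norm_trCLM_le (d : ℕ) : ‖trCLM d‖ ≤ Real.sqrt d :=
  ContinuousLinearMap.opNorm_le_bound _ (Real.sqrt_nonneg _) fun m => by
    simpa [Real.norm_eq_abs] using abs_trCLM_le d m

lemma divPair_eq (d : ℕ) (Ω : Set (Euc d)) (g : L2M d Ω) (q : L2S d Ω) :
    divPair d Ω g q = ⟪((trCLM d).compLp g : L2S d Ω), q⟫ := by
  rw [L2.inner_def]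
  refine integral_congr_ae ?_
  filter_upwards [(trCLM d).coeFn_compLp g] with x hx
  simp [divPair, hx, trCLM_apply, RCLike.inner_apply]
  ring

lemma abs_divPair_le (d : ℕ) (Ω : Set (Euc d)) (g : L2M d Ω) (q : L2S d Ω) :
    |divPair d Ω g q| ≤ Real.sqrt d * ‖g‖ * ‖q‖ := by
  rw [divPair_eq]
  calc |⟪((trCLM d).compLp g : L2S d Ω), q⟫| ≤ ‖(trCLM d).compLp g‖ * ‖q‖ :=
        abs_real_inner_le_norm _ _
    _ ≤ (‖trCLM d‖ * ‖g‖) * ‖q‖ :=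
        mul_le_mul_of_nonneg_right ((trCLM d).norm_compLp_le g) (norm_nonneg _)
    _ ≤ Real.sqrt d * ‖g‖ * ‖q‖ :=
        mul_le_mul_of_nonneg_right
          (mul_le_mul_of_nonneg_right (norm_trCLM_le d) (norm_nonneg _)) (norm_nonneg _)

lemma divPair_sub (d : ℕ) (Ω : Set (Euc d)) (g : L2M d Ω) (q q' : L2S d Ω) :
    divPair d Ω g q - divPair d Ω g q' = divPair d Ω g (q - q') := by
  simp only [divPair_eq]; rw [← inner_sub_right]

lemma divPair_neg_left (d : ℕ) (Ω : Set (Euc d)) (g : L2M d Ω) (q : L2S d Ω) :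
    divPair d Ω (-g) q = - divPair d Ω g q := by
  rw [show divPair d Ω (-g) q = ∫ x, -((∑ i, g x (i, i)) * q x) ∂(vol d Ω) from ?_,
    integral_neg]
  · rfl
  · refine integral_congr_ae ?_
    filter_upwards [Lp.coeFn_neg g] with x hx
    simp only [hx, Pi.neg_apply]
    simp [Finset.sum_neg_distrib, neg_mul]

lemma ratio_le (d : ℕ) (Ω : Set (Euc d)) {g : L2M d Ω} (hg : g ≠ 0) (q : L2S d Ω) :
    divPair d Ω g q / ‖g‖ ≤ Real.sqrt d * ‖q‖ := by
  have hg' : (0 : ℝ) < ‖g‖ := norm_pos_iff.mpr hg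
  rw [div_le_iff₀ hg']
  calc divPair d Ω g q ≤ |divPair d Ω g q| := le_abs_self _
    _ ≤ Real.sqrt d * ‖g‖ * ‖q‖ := abs_divPair_le d Ω g q
    _ = Real.sqrt d * ‖q‖ * ‖g‖ := by ring

lemma bddAbove_ratio (d : ℕ) (Ω : Set (Euc d)) (X : Set (L2M d Ω)) (q : L2S d Ω) :
    BddAbove ((fun g => divPair d Ω g q / ‖g‖) '' (X \ {0})) := by
  refine ⟨Real.sqrt d * ‖q‖, ?_⟩
  rintro r ⟨g, ⟨-, hg⟩, rfl⟩
  exact ratio_le d Ω (by simpa using hg) q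

lemma supRatio_le_add (d : ℕ) (Ω : Set (Euc d)) (Y : Set (L2M d Ω))
    (hY : (Y \ {0}).Nonempty) (q q' : L2S d Ω) :
    supRatio d Ω Y q ≤ supRatio d Ω Y q' + Real.sqrt d * ‖q - q'‖ := by
  refine csSup_le (hY.image _) ?_
  rintro r ⟨g, hg, rfl⟩
  have h0 : g ≠ 0 := by simpa using hg.2
  have h1 : divPair d Ω g q' / ‖g‖ ≤ supRatio d Ω Y q' :=
    le_csSup (bddAbove_ratio d Ω Y q') (Set.mem_image_of_mem _ hg)
  have h2 : divPair d Ω g q / ‖g‖ - divPair d Ω g q' / ‖g‖ = divPair d Ω g (q - q') / ‖g‖ := by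
    rw [div_sub_div_same, divPair_sub]
  have h3 := ratio_le d Ω h0 (q - q')
  linarith

lemma supRatio_mono (d : ℕ) (Ω : Set (Euc d)) {X Y : Set (L2M d Ω)} (hXY : X ⊆ Y)
    (hX : (X \ {0}).Nonempty) (q : L2S d Ω) :
    supRatio d Ω X q ≤ supRatio d Ω Y q :=
  csSup_le_csSup (bddAbove_ratio d Ω Y q) (hX.image _)
    (Set.image_mono (Set.diff_subset_diff_left hXY))

lemma supRatio_nonneg (d : ℕ) (Ω : Set (Euc d)) {X : Set (L2M d Ω)}
    (S : Submodule ℝ (L2M d Ω)) (hS : (S : Set (L2M d Ω)) = X) (q : L2S d Ω) :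
    0 ≤ supRatio d Ω X q := by
  rcases Set.eq_empty_or_nonempty (X \ {0}) with h | h
  · simp [supRatio, h]
  · obtain ⟨g, hgX, hg0⟩ := h
    have hg0' : g ≠ 0 := by simpa using hg0
    have hgS : g ∈ S := by rw [← SetLike.mem_coe, hS]; exact hgX
    have hngX : -g ∈ X \ {0} := by
      refine ⟨by rw [← hS]; exact SetLike.mem_coe.mpr (S.neg_mem hgS), by simpa using hg0'⟩
    have h1 : divPair d Ω g q / ‖g‖ ≤ supRatio d Ω X q :=
      le_csSup (bddAbove_ratio d Ω X q) (Set.mem_image_of_mem _ ⟨hgX, hg0⟩)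
    have h2 : divPair d Ω (-g) q / ‖(-g)‖ ≤ supRatio d Ω X q :=
      le_csSup (bddAbove_ratio d Ω X q) (Set.mem_image_of_mem _ hngX)
    rw [divPair_neg_left, norm_neg, neg_div] at h2
    linarith

end DiscreteLBBAux

end

noncomputable section

/-- If the discrete LBB condition `inf_n βₙ = β⋆ > 0` holds and the
pressure spaces `Mₙ` are asymptotically dense in `L²_∘(Ω)`, then `β⋆ ≤ β(Ω)`. -/
theorem discrete_LBB_le_beta
    (d : ℕ) (Ω : Set (Euc d)) (hΩ : IsBoundedDomain d Ω)
    (X : ℕ → Set (L2M d Ω)) (M : ℕ → Set (L2S d Ω))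
    (hX : ∀ n, IsClosedSubspace (X n) ∧ X n ⊆ H10grad d Ω)
    (hM : ∀ n, IsClosedSubspace (M n) ∧ M n ⊆ meanZero d Ω)
    (βstar : ℝ) (hβ : ⨅ n, infSup d Ω (X n) (M n) = βstar) (hpos : 0 < βstar)
    (hdense : AsympDense d Ω M) :
    βstar ≤ beta d Ω := by
  classical
  have hSub : ∀ n, ∃ S : Submodule ℝ (L2M d Ω), (S : Set (L2M d Ω)) = X n :=
    fun n => ((hX n).1).2
  have hXnn : ∀ n (q' : L2S d Ω), 0 ≤ supRatio d Ω (X n) q' := by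
    intro n q'
    obtain ⟨S, hS⟩ := hSub n
    exact DiscreteLBBAux.supRatio_nonneg d Ω S hS q'
  have hinfnn : ∀ n, 0 ≤ infSup d Ω (X n) (M n) := by
    intro n
    rcases Set.eq_empty_or_nonempty (M n \ {0}) with h | h
    · simp [infSup, h]
    · refine Real.sInf_nonneg ?_
      rintro r ⟨q', hq', rfl⟩
      exact div_nonneg (hXnn n q') (norm_nonneg _)
  have hβn : ∀ n, βstar ≤ infSup d Ω (X n) (M n) := by
    intro n; rw [← hβ]
    exact ciInf_le ⟨0, by rintro r ⟨m, rfl⟩; exact hinfnn m⟩ n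
  have hMne : ∀ n, (M n \ {0}).Nonempty := by
    intro n
    rcases Set.eq_empty_or_nonempty (M n \ {0}) with h | h
    · exfalso
      have h1 := hβn n
      simp only [infSup, h, Set.image_empty, Real.sInf_empty] at h1
      linarith
    · exact h
  have hinf_le : ∀ n (q' : L2S d Ω), q' ∈ M n \ {0} →
      infSup d Ω (X n) (M n) ≤ supRatio d Ω (X n) q' / ‖q'‖ := by
    intro n q' hq'
    refine csInf_le ⟨0, ?_⟩ (Set.mem_image_of_mem _ hq')
    rintro r ⟨p, hp, rfl⟩
    exact div_nonneg (hXnn n p) (norm_nonneg _)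
  have hXne : ∀ n, (X n \ {0}).Nonempty := by
    intro n
    rcases Set.eq_empty_or_nonempty (X n \ {0}) with h | h
    · exfalso
      obtain ⟨q0, hq0⟩ := hMne n
      have h1 := hinf_le n q0 hq0
      have h2 : supRatio d Ω (X n) q0 = 0 := by
        simp [supRatio, h]
      rw [h2, zero_div] at h1
      linarith [hβn n]
    · exact h
  have hH10ne : (H10grad d Ω \ {0}).Nonempty := by
    obtain ⟨g, hg, hg0⟩ := hXne 0
    exact ⟨g, (hX 0).2 hg, hg0⟩
  have hH10nn : ∀ q' : L2S d Ω, 0 ≤ supRatio d Ω (H10grad d Ω) q' := by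
    intro q'
    exact (hXnn 0 q').trans (DiscreteLBBAux.supRatio_mono d Ω (hX 0).2 (hXne 0) q')
  have key : ∀ q, q ∈ meanZero d Ω \ {0} → βstar * ‖q‖ ≤ supRatio d Ω (H10grad d Ω) q := by
    intro q hq
    obtain ⟨qn, hqnM, hqn⟩ := hdense q hq.1
    have step : ∀ n, βstar * ‖qn n‖ ≤
        supRatio d Ω (H10grad d Ω) q + Real.sqrt d * ‖qn n - q‖ := by
      intro n
      by_cases h0 : qn n = 0
      · have h5 : (0 : ℝ) ≤ Real.sqrt d * ‖qn n - q‖ := by positivity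
        have h6 := hH10nn q
        calc βstar * ‖qn n‖ = 0 := by rw [h0, norm_zero, mul_zero]
          _ ≤ _ := add_nonneg h6 h5
      · have hmem : qn n ∈ M n \ {0} := ⟨hqnM n, by simpa using h0⟩
        have h1 : βstar ≤ supRatio d Ω (X n) (qn n) / ‖qn n‖ :=
          (hβn n).trans (hinf_le n _ hmem)
        have hq0 : (0 : ℝ) < ‖qn n‖ := norm_pos_iff.mpr h0
        have h2 : βstar * ‖qn n‖ ≤ supRatio d Ω (X n) (qn n) := by
          calc βstar * ‖qn n‖ ≤ (supRatio d Ω (X n) (qn n) / ‖qn n‖) * ‖qn n‖ :=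
                mul_le_mul_of_nonneg_right h1 (norm_nonneg _)
            _ = supRatio d Ω (X n) (qn n) := div_mul_cancel₀ _ hq0.ne'
        have h3 : supRatio d Ω (X n) (qn n) ≤ supRatio d Ω (H10grad d Ω) (qn n) :=
          DiscreteLBBAux.supRatio_mono d Ω (hX n).2 (hXne n) _
        have h4 := DiscreteLBBAux.supRatio_le_add d Ω (H10grad d Ω) hH10ne (qn n) q
        linarith
    have t0 : Tendsto (fun n => ‖qn n - q‖) atTop (𝓝 0) := by
      have := (hqn.sub_const q).norm
      simpa using this
    have t1 : Tendsto (fun n => βstar * ‖qn n‖) atTop (𝓝 (βstar * ‖q‖)) :=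
      hqn.norm.const_mul βstar
    have t2 : Tendsto (fun n => supRatio d Ω (H10grad d Ω) q + Real.sqrt d * ‖qn n - q‖)
        atTop (𝓝 (supRatio d Ω (H10grad d Ω) q)) := by
      have h := Tendsto.const_mul (Real.sqrt d) t0
      have h2 := (tendsto_const_nhds (x := supRatio d Ω (H10grad d Ω) q)
        (f := atTop (α := ℕ))).add h
      simpa using h2
    exact le_of_tendsto_of_tendsto' t1 t2 step
  obtain ⟨q0, hq0M, hq00⟩ := hMne 0
  have hq0 : q0 ∈ meanZero d Ω \ {0} := ⟨(hM 0).2 hq0M, hq00⟩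
  refine le_csInf ⟨_, Set.mem_image_of_mem _ hq0⟩ ?_
  rintro b ⟨q, hq, rfl⟩
  have hqn0 : q ≠ 0 := by simpa using hq.2
  have hqpos : (0 : ℝ) < ‖q‖ := norm_pos_iff.mpr hqn0
  rw [le_div_iff₀ hqpos]
  exact key q hq


end
end
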